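/- Let C*_N = 2 Γ²(N/4) / Γ²((N-2)/4) be the best constant of Kato's inequality in the half-space ℝ^N_+. Then lim_{N→∞} C*_N / N = 1/2, and also lim_{N→∞} j_{(N-3)/2,1} / N = 1/2, so that j_{(N-3)/2,1} ∼ C*_N as N → ∞. -/

import Mathlib

/-!
`C*_N` is squeezed between `N/2 - 2` and `N/2 - 1` by the log-convexity of `Γ`, applied with
`y = (N - 2)/4` at the midpoints `y + 1/2` of `[y, y + 1]` and `y + 1` of `[y + 1/2, y + 3/2]`.

For the Bessel zeros write `J_μ(z) = (z/2)^μ g(z²/4)` with an entire power series `g`; then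
`u(z) = z^(μ+1/2) g(z²/4)` solves `u'' + (1 - (μ² - 1/4)/z²) u = 0`. While `z² ≤ μ² - 1/4` the
potential is nonpositive, so a solution vanishing at both ends of an interval has the sign of its
second derivative and must vanish inside; since `u(0) = 0`, this gives `μ² - 1/4 < j_{μ,1}²`.
Beyond `t μ` (`t > 1`) the potential is at least `m² = 1 - 1/t²`, and Sturm comparison with
`sin (m (z - t μ))` produces a zero within `π/m` of `t μ`. Hence `μ - 1 < j_{μ,1} ≤ t μ + O_t(1)`.
-/

open Real Filter

noncomputable def besselJ (μ z : ℝ) : ℝ :=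
  ∑' k : ℕ, ((-1 : ℝ) ^ k / ((k.factorial : ℝ) * Real.Gamma ((k : ℝ) + μ + 1))) *
    (z / 2) ^ (2 * (k : ℝ) + μ)

def IsFirstPosZero (f : ℝ → ℝ) (j : ℝ) : Prop :=
  0 < j ∧ f j = 0 ∧ ∀ z, 0 < z → z < j → f z ≠ 0

/-- Best constant of Kato's inequality in the half-space `ℝ^N_+`. -/
noncomputable def katoConst (N : ℕ) : ℝ :=
  2 * Real.Gamma ((N : ℝ) / 4) ^ 2 / Real.Gamma (((N : ℝ) - 2) / 4) ^ 2

open Set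

open scoped Nat

noncomputable def powerSeriesFun (c : ℕ → ℝ) (x : ℝ) : ℝ := ∑' k, c k * x ^ k

def derivCoeff (c : ℕ → ℝ) (k : ℕ) : ℝ := (k + 1) * c (k + 1)

section FactorialDecay

variable {c : ℕ → ℝ} {B : ℝ}

lemma abs_derivCoeff_le (h : ∀ k, |c k| ≤ B / k !) (k : ℕ) : |derivCoeff c k| ≤ B / k ! := by
  have hk : (0 : ℝ) < k + 1 := by positivity
  calc |derivCoeff c k| = (k + 1) * |c (k + 1)| := by
        rw [derivCoeff, abs_mul, abs_of_pos hk]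
    _ ≤ (k + 1) * (B / (k + 1)!) := by gcongr; exact h _
    _ = B / k ! := by
        rw [Nat.factorial_succ, Nat.cast_mul]; push_cast; field_simp

lemma summable_mul_pow_of_abs_le (h : ∀ k, |c k| ≤ B / k !) (x : ℝ) :
    Summable fun k ↦ c k * x ^ k := by
  refine .of_norm_bounded ((Real.summable_pow_div_factorial |x|).mul_left B) fun k ↦ ?_
  rw [norm_mul, norm_pow, Real.norm_eq_abs, Real.norm_eq_abs, mul_div_assoc', mul_div_right_comm]
  gcongr
  exact h k

lemma hasDerivAt_powerSeriesFun (h : ∀ k, |c k| ≤ B / k !) (x : ℝ) :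
    HasDerivAt (powerSeriesFun c) (powerSeriesFun (derivCoeff c) x) x := by
  set R := |x| + 1
  have hR : 1 ≤ R := le_add_of_nonneg_left (abs_nonneg x)
  have hx : x ∈ Ioo (-R) R := abs_lt.1 (lt_add_one _)
  -- `k ≤ 2 ^ k` absorbs the factor `k` of the differentiated terms.
  have hbound : ∀ k y, y ∈ Ioo (-R) R → ‖c k * (k * y ^ (k - 1))‖ ≤ B * (2 * R) ^ k / k ! := by
    intro k y hy
    have hyR : |y| ^ (k - 1) ≤ R ^ k :=
      (pow_le_pow_left₀ (abs_nonneg y) (abs_lt.2 hy).le _).trans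
        (pow_le_pow_right₀ hR (Nat.sub_le k 1))
    have hk : (k : ℝ) ≤ 2 ^ k := by exact_mod_cast Nat.lt_two_pow_self.le
    rw [norm_mul, norm_mul, norm_pow, Real.norm_eq_abs, Real.norm_eq_abs, Real.norm_eq_abs,
      Nat.abs_cast, mul_pow, mul_div_right_comm]
    exact mul_le_mul (h k) (mul_le_mul hk hyR (by positivity) (by positivity)) (by positivity)
      ((abs_nonneg _).trans (h k))
  have hsum : Summable fun k : ℕ ↦ B * (2 * R) ^ k / k ! := by
    simpa only [mul_div_assoc] using (Real.summable_pow_div_factorial (2 * R)).mul_left B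
  have hderiv := hasDerivAt_tsum_of_isPreconnected hsum isOpen_Ioo isPreconnected_Ioo
    (g := fun k y ↦ c k * y ^ k) (g' := fun k y ↦ c k * (k * y ^ (k - 1)))
    (fun k y _ ↦ by simpa using (hasDerivAt_pow k y).const_mul (c k)) hbound hx
    (summable_mul_pow_of_abs_le h x) hx
  have hshift : ∑' k : ℕ, c k * (k * x ^ (k - 1)) = powerSeriesFun (derivCoeff c) x := by
    rw [(Summable.of_norm_bounded hsum fun k ↦ hbound k x hx).tsum_eq_zero_add]
    simp only [powerSeriesFun, derivCoeff, Nat.cast_zero, zero_mul, mul_zero, zero_add,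
      Nat.add_sub_cancel, Nat.cast_add, Nat.cast_one]
    exact tsum_congr fun k ↦ by ring
  exact hshift ▸ hderiv

lemma hasSum_natCast_mul_powerSeriesFun (h : ∀ k, |c k| ≤ B / k !) (x : ℝ) :
    HasSum (fun k ↦ k * c k * x ^ k) (x * powerSeriesFun (derivCoeff c) x) := by
  rw [← hasSum_nat_add_iff' 1]
  simpa [powerSeriesFun, derivCoeff, pow_succ, mul_comm, mul_left_comm, mul_assoc] using
    (summable_mul_pow_of_abs_le (abs_derivCoeff_le h) x).hasSum.mul_left x

lemma hasDerivAt_powerSeriesFun_sq_div_four (h : ∀ k, |c k| ≤ B / k !) (z : ℝ) :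
    HasDerivAt (fun y ↦ powerSeriesFun c (y ^ 2 / 4))
      (z / 2 * powerSeriesFun (derivCoeff c) (z ^ 2 / 4)) z := by
  have hsq : HasDerivAt (fun y : ℝ ↦ y ^ 2 / 4) (z / 2) z :=
    ((hasDerivAt_pow 2 z).div_const 4).congr_deriv (by push_cast; ring)
  exact ((hasDerivAt_powerSeriesFun h (z ^ 2 / 4)).comp z hsq).congr_deriv (mul_comm _ _)

end FactorialDecay

section SecondOrderLinear

variable {u v q : ℝ → ℝ}

lemma exists_nonpos_Icc_of_sq_le_potential {A m : ℝ} (hm : 0 < m)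
    (hu : ∀ z ∈ Icc A (A + π / m), HasDerivAt u (v z) z)
    (hv : ∀ z ∈ Icc A (A + π / m), HasDerivAt v (-q z * u z) z)
    (hq : ∀ z ∈ Icc A (A + π / m), m ^ 2 ≤ q z) :
    ∃ z ∈ Icc A (A + π / m), u z ≤ 0 := by
  by_contra! hpos
  set B := A + π / m
  have hAB : A ≤ B := le_add_of_nonneg_right (div_pos pi_pos hm).le
  -- Wronskian of `u` against the comparison solution `sin (m (z - A))` of `w'' + m² w = 0`.
  set W := fun z ↦ v z * sin (m * (z - A)) - u z * (m * cos (m * (z - A)))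
  have hsin : ∀ z ∈ Icc A B, 0 ≤ sin (m * (z - A)) := fun z hz ↦ by
    refine sin_nonneg_of_nonneg_of_le_pi (mul_nonneg hm.le (by linarith [hz.1])) ?_
    calc m * (z - A) ≤ m * (π / m) := by gcongr; linarith [hz.2]
      _ = π := by field_simp
  have hW : ∀ z ∈ Icc A B, HasDerivAt W ((m ^ 2 - q z) * (u z * sin (m * (z - A)))) z := by
    intro z hz
    have hlin : HasDerivAt (fun y ↦ m * (y - A)) m z := by
      simpa using ((hasDerivAt_id z).sub_const A).const_mul m
    exact (((hv z hz).mul (hlin.sin)).sub ((hu z hz).mul (hlin.cos.const_mul m))).congr_deriv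
      (by ring)
  have hanti : AntitoneOn W (Icc A B) := by
    refine antitoneOn_of_hasDerivWithinAt_nonpos (convex_Icc A B)
      (f' := fun z ↦ (m ^ 2 - q z) * (u z * sin (m * (z - A))))
      (fun z hz ↦ (hW z hz).continuousAt.continuousWithinAt) (fun z hz ↦ ?_) (fun z hz ↦ ?_)
    · rw [interior_Icc] at hz ⊢
      exact (hW z (Ioo_subset_Icc_self hz)).hasDerivWithinAt
    · rw [interior_Icc] at hz
      have hz' := Ioo_subset_Icc_self hz
      exact mul_nonpos_of_nonpos_of_nonneg (by linarith [hq z hz'])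
        (mul_nonneg (hpos z hz').le (hsin z hz'))
  have hmB : m * (B - A) = π := by simp only [B]; field_simp; ring
  have hWAB := hanti (left_mem_Icc.2 hAB) (right_mem_Icc.2 hAB) hAB
  simp only [W, sub_self, mul_zero, sin_zero, cos_zero, hmB, sin_pi, cos_pi] at hWAB
  nlinarith [hpos A (left_mem_Icc.2 hAB), hpos B (right_mem_Icc.2 hAB)]

lemma exists_zero_Icc_of_sq_le_potential {A m : ℝ} (hm : 0 < m)
    (hu : ∀ z ∈ Icc A (A + π / m), HasDerivAt u (v z) z)
    (hv : ∀ z ∈ Icc A (A + π / m), HasDerivAt v (-q z * u z) z)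
    (hq : ∀ z ∈ Icc A (A + π / m), m ^ 2 ≤ q z) :
    ∃ z ∈ Icc A (A + π / m), u z = 0 := by
  obtain ⟨z₁, hz₁, hu₁⟩ := exists_nonpos_Icc_of_sq_le_potential hm hu hv hq
  obtain ⟨z₂, hz₂, hu₂⟩ := exists_nonpos_Icc_of_sq_le_potential (u := -u) (v := -v) hm
    (fun z hz ↦ (hu z hz).neg) (fun z hz ↦ ((hv z hz).neg).congr_deriv (by simp)) hq
  exact isPreconnected_Icc.intermediate_value hz₁ hz₂
    (fun z hz ↦ (hu z hz).continuousAt.continuousWithinAt) ⟨hu₁, by simpa using hu₂⟩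

lemma exists_nonpos_Ioo_of_potential_nonpos {a b : ℝ} (hab : a < b)
    (hcont : ContinuousOn u (Icc a b)) (hu : ∀ z ∈ Ioo a b, HasDerivAt u (v z) z)
    (hv : ∀ z ∈ Ioo a b, HasDerivAt v (-q z * u z) z) (hq : ∀ z ∈ Ioo a b, q z ≤ 0)
    (ha : u a = 0) (hb : u b = 0) : ∃ z ∈ Ioo a b, u z ≤ 0 := by
  by_contra! hpos
  have hconv : ConvexOn ℝ (Icc a b) u := by
    refine convexOn_of_hasDerivWithinAt2_nonneg (convex_Icc a b) hcont (f' := v)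
      (f'' := fun z ↦ -q z * u z)
      (fun z hz ↦ ?_) (fun z hz ↦ ?_) (fun z hz ↦ ?_) <;> simp only [interior_Icc] at hz ⊢
    · exact (hu z hz).hasDerivWithinAt
    · exact (hv z hz).hasDerivWithinAt
    · exact mul_nonneg (neg_nonneg.2 (hq z hz)) (hpos z hz).le
  have hmid := hconv.2 (left_mem_Icc.2 hab.le) (right_mem_Icc.2 hab.le)
    one_half_pos.le one_half_pos.le (add_halves 1)
  simp only [ha, hb, smul_eq_mul, mul_zero, add_zero] at hmid
  exact hmid.not_gt (hpos _ ⟨by linarith, by linarith⟩)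

lemma exists_zero_Ioo_of_potential_nonpos {a b : ℝ} (hab : a < b)
    (hcont : ContinuousOn u (Icc a b)) (hu : ∀ z ∈ Ioo a b, HasDerivAt u (v z) z)
    (hv : ∀ z ∈ Ioo a b, HasDerivAt v (-q z * u z) z) (hq : ∀ z ∈ Ioo a b, q z ≤ 0)
    (ha : u a = 0) (hb : u b = 0) : ∃ z ∈ Ioo a b, u z = 0 := by
  obtain ⟨z₁, hz₁, hu₁⟩ := exists_nonpos_Ioo_of_potential_nonpos hab hcont hu hv hq ha hb
  obtain ⟨z₂, hz₂, hu₂⟩ := exists_nonpos_Ioo_of_potential_nonpos (u := -u) (v := -v) hab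
    hcont.neg (fun z hz ↦ (hu z hz).neg) (fun z hz ↦ ((hv z hz).neg).congr_deriv (by simp)) hq
    (by simp [ha]) (by simp [hb])
  exact isPreconnected_Ioo.intermediate_value hz₁ hz₂ (hcont.mono Ioo_subset_Icc_self)
    ⟨hu₁, by simpa using hu₂⟩

end SecondOrderLinear

lemma Gamma_midpoint_sq_le {a b : ℝ} (ha : 0 < a) (hb : 0 < b) :
    Gamma ((a + b) / 2) ^ 2 ≤ Gamma a * Gamma b := by
  have h := Gamma_mul_add_mul_le_rpow_Gamma_mul_rpow_Gamma ha hb one_half_pos one_half_pos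
    (add_halves 1)
  rw [← sqrt_eq_rpow, ← sqrt_eq_rpow, ← sqrt_mul (Gamma_pos_of_pos ha).le,
    show 1 / 2 * a + 1 / 2 * b = (a + b) / 2 by ring] at h
  exact (le_sqrt' (Gamma_pos_of_pos (by positivity))).1 h

lemma Gamma_add_half_sq_le {y : ℝ} (hy : 0 < y) : Gamma (y + 1 / 2) ^ 2 ≤ y * Gamma y ^ 2 := by
  have h := Gamma_midpoint_sq_le hy (by linarith : 0 < y + 1)
  rw [show (y + (y + 1)) / 2 = y + 1 / 2 by ring, Gamma_add_one hy.ne'] at h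
  linarith

lemma sq_mul_Gamma_sq_le {y : ℝ} (hy : 0 < y) :
    y ^ 2 * Gamma y ^ 2 ≤ (y + 1 / 2) * Gamma (y + 1 / 2) ^ 2 := by
  have h := Gamma_midpoint_sq_le (by linarith : 0 < y + 1 / 2) (by linarith : 0 < y + 1 / 2 + 1)
  rw [show (y + 1 / 2 + (y + 1 / 2 + 1)) / 2 = y + 1 by ring, Gamma_add_one hy.ne',
    Gamma_add_one (by linarith)] at h
  linarith

lemma tendsto_div_natCast_of_le {f : ℕ → ℝ} {L c : ℝ} (hlow : ∀ᶠ N in atTop, L * N - c ≤ f N)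
    (hup : ∀ L' > L, ∃ C, ∀ᶠ N in atTop, f N ≤ L' * N + C) :
    Tendsto (fun N ↦ f N / N) atTop (nhds L) := by
  have hinv : Tendsto (fun N : ℕ ↦ (N : ℝ)⁻¹) atTop (nhds 0) :=
    tendsto_inv_atTop_zero.comp tendsto_natCast_atTop_atTop
  refine tendsto_order.2 ⟨fun a ha ↦ ?_, fun a ha ↦ ?_⟩
  · have hlim : Tendsto (fun N : ℕ ↦ L - c * (N : ℝ)⁻¹) atTop (nhds L) := by
      simpa using tendsto_const_nhds.sub (hinv.const_mul c)
    filter_upwards [hlim.eventually (lt_mem_nhds ha), hlow, eventually_gt_atTop 0]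
      with N haN hfN hN
    have hN' : (0 : ℝ) < N := by exact_mod_cast hN
    calc a < L - c * (N : ℝ)⁻¹ := haN
      _ = (L * N - c) / N := by field_simp
      _ ≤ f N / N := by gcongr
  · have hmid : (L + a) / 2 < a := by linarith
    obtain ⟨C, hC⟩ := hup ((L + a) / 2) (by linarith)
    have hlim : Tendsto (fun N : ℕ ↦ (L + a) / 2 + C * (N : ℝ)⁻¹) atTop (nhds ((L + a) / 2)) := by
      simpa using tendsto_const_nhds.add (hinv.const_mul C)
    filter_upwards [hlim.eventually (gt_mem_nhds hmid), hC, eventually_gt_atTop 0]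
      with N haN hfN hN
    have hN' : (0 : ℝ) < N := by exact_mod_cast hN
    calc f N / N ≤ ((L + a) / 2 * N + C) / N := by gcongr
      _ = (L + a) / 2 + C * (N : ℝ)⁻¹ := by field_simp
      _ < a := haN

noncomputable def besselCoeff (μ : ℝ) (k : ℕ) : ℝ := (-1) ^ k / (k ! * Gamma (k + μ + 1))

section BesselSeries

variable {μ : ℝ}

lemma besselCoeff_succ (hμ : -1 < μ) (k : ℕ) :
    (k + 1) * (k + μ + 1) * besselCoeff μ (k + 1) = -besselCoeff μ k := by
  have hpos : 0 < (k : ℝ) + μ + 1 := by have := k.cast_nonneg (α := ℝ); linarith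
  have hΓ : Gamma ((k + 1 : ℕ) + μ + 1) = (k + μ + 1) * Gamma (k + μ + 1) := by
    rw [← Gamma_add_one hpos.ne']; push_cast; ring_nf
  have hΓ₀ := (Gamma_pos_of_pos hpos).ne'
  rw [besselCoeff, besselCoeff, hΓ, Nat.factorial_succ, pow_succ]
  push_cast
  field_simp

lemma abs_besselCoeff_le (hμ : 0 ≤ μ) (k : ℕ) : |besselCoeff μ k| ≤ besselCoeff μ 0 / k ! := by
  induction k with
  | zero =>
    rw [Nat.factorial_zero, Nat.cast_one, div_one, abs_of_nonneg]
    simpa [besselCoeff] using (Gamma_pos_of_pos (by linarith : (0 : ℝ) < μ + 1)).le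
  | succ k ih =>
    have hk : (1 : ℝ) ≤ k + μ + 1 := by have := k.cast_nonneg (α := ℝ); linarith
    have hrec : (k + 1) * (k + μ + 1) * |besselCoeff μ (k + 1)| = |besselCoeff μ k| := by
      rw [← abs_of_pos (by positivity : (0 : ℝ) < (k + 1) * (k + μ + 1)), ← abs_mul,
        besselCoeff_succ (by linarith), abs_neg]
    rw [le_div_iff₀ (by positivity)] at ih
    rw [le_div_iff₀ (by positivity), Nat.factorial_succ, Nat.cast_mul]
    calc |besselCoeff μ (k + 1)| * ((k + 1 : ℕ) * k !)
        = (k + 1) * 1 * |besselCoeff μ (k + 1)| * k ! := by push_cast; ring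
      _ ≤ (k + 1) * (k + μ + 1) * |besselCoeff μ (k + 1)| * k ! := by gcongr
      _ = |besselCoeff μ k| * k ! := by rw [hrec]
      _ ≤ besselCoeff μ 0 := ih

lemma powerSeriesFun_besselCoeff_ode (hμ : 0 ≤ μ) (x : ℝ) :
    x * powerSeriesFun (derivCoeff (derivCoeff (besselCoeff μ))) x
      + (μ + 1) * powerSeriesFun (derivCoeff (besselCoeff μ)) x
      + powerSeriesFun (besselCoeff μ) x = 0 := by
  have ha := abs_besselCoeff_le hμ
  have hsum := ((hasSum_natCast_mul_powerSeriesFun (abs_derivCoeff_le ha) x).add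
    ((summable_mul_pow_of_abs_le (abs_derivCoeff_le ha) x).hasSum.mul_left (μ + 1))).add
    (summable_mul_pow_of_abs_le ha x).hasSum
  refine hsum.unique (hasSum_zero.congr_fun fun k ↦ ?_)
  have := besselCoeff_succ (μ := μ) (by linarith) k
  simp only [derivCoeff]
  linear_combination (x ^ k) * this

end BesselSeries

-- `2 ^ μ √z J_μ(z)` for `z > 0`.
noncomputable def besselNormal (μ z : ℝ) : ℝ :=
  z ^ (μ + 1 / 2) * powerSeriesFun (besselCoeff μ) (z ^ 2 / 4)

noncomputable def besselNormalDeriv (μ z : ℝ) : ℝ :=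
  (μ + 1 / 2) * z ^ (μ - 1 / 2) * powerSeriesFun (besselCoeff μ) (z ^ 2 / 4)
    + z ^ (μ + 1 / 2) * (z / 2 * powerSeriesFun (derivCoeff (besselCoeff μ)) (z ^ 2 / 4))

noncomputable def besselPotential (μ z : ℝ) : ℝ := 1 - (μ ^ 2 - 1 / 4) / z ^ 2

section BesselNormal

variable {μ z : ℝ}

lemma besselJ_eq_mul_powerSeriesFun (hz : 0 < z) :
    besselJ μ z = (z / 2) ^ μ * powerSeriesFun (besselCoeff μ) (z ^ 2 / 4) := by
  rw [besselJ, powerSeriesFun, ← tsum_mul_left]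
  refine tsum_congr fun k ↦ ?_
  rw [rpow_add (by positivity), rpow_mul_natCast (by positivity), rpow_two, besselCoeff]
  ring

lemma besselJ_eq_zero_iff (hz : 0 < z) : besselJ μ z = 0 ↔ besselNormal μ z = 0 := by
  rw [besselJ_eq_mul_powerSeriesFun hz, besselNormal, mul_eq_zero, mul_eq_zero,
    or_iff_right (rpow_pos_of_pos (by positivity) _).ne', or_iff_right (rpow_pos_of_pos hz _).ne']

lemma continuous_besselNormal (hμ : 0 ≤ μ) : Continuous (besselNormal μ) :=
  (continuous_rpow_const (by linarith)).mul (continuous_iff_continuousAt.2 fun z ↦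
    (hasDerivAt_powerSeriesFun_sq_div_four (abs_besselCoeff_le hμ) z).continuousAt)

lemma besselNormal_zero (hμ : 0 ≤ μ) : besselNormal μ 0 = 0 := by
  rw [besselNormal, zero_rpow (by linarith), zero_mul]

lemma hasDerivAt_besselNormal (hμ : 0 ≤ μ) (hz : 0 < z) :
    HasDerivAt (besselNormal μ) (besselNormalDeriv μ z) z := by
  have hpow := hasDerivAt_rpow_const (p := μ + 1 / 2) (Or.inl hz.ne')
  rw [show μ + 1 / 2 - 1 = μ - 1 / 2 by ring] at hpow
  exact hpow.mul (hasDerivAt_powerSeriesFun_sq_div_four (abs_besselCoeff_le hμ) z)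

lemma hasDerivAt_besselNormalDeriv (hμ : 0 ≤ μ) (hz : 0 < z) :
    HasDerivAt (besselNormalDeriv μ) (-besselPotential μ z * besselNormal μ z) z := by
  have ha := abs_besselCoeff_le hμ
  have hpow₁ := hasDerivAt_rpow_const (p := μ - 1 / 2) (Or.inl hz.ne')
  have hpow₂ := hasDerivAt_rpow_const (p := μ + 1 / 2) (Or.inl hz.ne')
  have hderiv := ((hpow₁.const_mul (μ + 1 / 2)).mul
    (hasDerivAt_powerSeriesFun_sq_div_four ha z)).add
    (hpow₂.mul (((hasDerivAt_id z).div_const 2).mul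
      (hasDerivAt_powerSeriesFun_sq_div_four (abs_derivCoeff_le ha) z)))
  refine hderiv.congr_deriv ?_
  have hode := powerSeriesFun_besselCoeff_ode hμ (z ^ 2 / 4)
  have h₀ : μ - 1 / 2 - 1 = μ - 3 / 2 := by ring
  have h₁ : z ^ (μ - 1 / 2) = z ^ (μ - 3 / 2) * z := by
    rw [← rpow_add_one hz.ne']; ring_nf
  have h₂ : z ^ (μ + 1 / 2 - 1) = z ^ (μ - 3 / 2) * z := by
    rw [← rpow_add_one hz.ne']; ring_nf
  have h₃ : z ^ (μ + 1 / 2) = z ^ (μ - 3 / 2) * z * z := by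
    rw [← rpow_add_one hz.ne', ← rpow_add_one hz.ne']; ring_nf
  simp only [Pi.mul_apply, id_eq]
  have hcancel : (μ ^ 2 - 1 / 4) / z ^ 2 * (z ^ (μ - 3 / 2) * z * z)
      = (μ ^ 2 - 1 / 4) * z ^ (μ - 3 / 2) := by
    field_simp
  rw [besselPotential, besselNormal, h₀, h₁, h₂, h₃]
  linear_combination (z ^ (μ - 3 / 2) * z ^ 2) * hode
    - powerSeriesFun (besselCoeff μ) (z ^ 2 / 4) * hcancel

end BesselNormal

section BesselZero

variable {μ j : ℝ}

lemma lt_sq_of_isFirstPosZero_besselJ (hμ : 0 ≤ μ) (hj : IsFirstPosZero (besselJ μ) j) :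
    μ ^ 2 - 1 / 4 < j ^ 2 := by
  obtain ⟨hj₀, hjzero, hfirst⟩ := hj
  by_contra! hle
  have hq : ∀ z ∈ Ioo 0 j, besselPotential μ z ≤ 0 := fun z hz ↦ by
    have : z ^ 2 ≤ μ ^ 2 - 1 / 4 := by nlinarith [hz.1, hz.2]
    rw [besselPotential, sub_nonpos, one_le_div (by nlinarith [hz.1])]
    exact this
  obtain ⟨z, hz, hzero⟩ := exists_zero_Ioo_of_potential_nonpos hj₀
    (continuous_besselNormal hμ).continuousOn (fun z hz ↦ hasDerivAt_besselNormal hμ hz.1)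
    (fun z hz ↦ hasDerivAt_besselNormalDeriv hμ hz.1) hq (besselNormal_zero hμ)
    ((besselJ_eq_zero_iff hj₀).1 hjzero)
  exact hfirst z hz.1 hz.2 ((besselJ_eq_zero_iff hz.1).2 hzero)

lemma sub_one_lt_of_isFirstPosZero_besselJ (hμ : 1 ≤ μ) (hj : IsFirstPosZero (besselJ μ) j) :
    μ - 1 < j := by
  have := lt_sq_of_isFirstPosZero_besselJ (by linarith) hj
  nlinarith [hj.1]

lemma le_of_isFirstPosZero_besselJ (hμ : 0 ≤ μ) {A m : ℝ} (hA : 0 < A) (hm : 0 < m)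
    (hq : ∀ z, A ≤ z → m ^ 2 ≤ besselPotential μ z) (hj : IsFirstPosZero (besselJ μ) j) :
    j ≤ A + π / m := by
  obtain ⟨z, hz, hzero⟩ := exists_zero_Icc_of_sq_le_potential hm
    (fun z hz ↦ hasDerivAt_besselNormal hμ (hA.trans_le hz.1))
    (fun z hz ↦ hasDerivAt_besselNormalDeriv hμ (hA.trans_le hz.1)) (fun z hz ↦ hq z hz.1)
  by_contra! hlt
  exact hj.2.2 z (hA.trans_le hz.1) (hz.2.trans_lt hlt)
    ((besselJ_eq_zero_iff (hA.trans_le hz.1)).2 hzero)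

lemma le_mul_add_of_isFirstPosZero_besselJ (hμ : 0 < μ) {t : ℝ} (ht : 1 < t)
    (hj : IsFirstPosZero (besselJ μ) j) : j ≤ t * μ + π / √(1 - 1 / t ^ 2) := by
  have ht2 : 1 / t ^ 2 < 1 := by rw [div_lt_one (by positivity)]; nlinarith
  refine le_of_isFirstPosZero_besselJ hμ.le (by positivity) (sqrt_pos.2 (by linarith))
    (fun z hz ↦ ?_) hj
  have hz₀ : 0 < z := by nlinarith
  have : (μ ^ 2 - 1 / 4) / z ^ 2 ≤ 1 / t ^ 2 := by
    rw [div_le_div_iff₀ (by positivity) (by positivity)]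
    nlinarith [mul_le_mul hz hz (by positivity) hz₀.le]
  rw [sq_sqrt (by linarith), besselPotential]
  linarith

end BesselZero

lemma katoConst_le {N : ℕ} (hN : 2 < N) : katoConst N ≤ N / 2 - 1 := by
  have hy : 0 < ((N : ℝ) - 2) / 4 := by
    have : (2 : ℝ) < N := by exact_mod_cast hN
    linarith
  have h := Gamma_add_half_sq_le hy
  rw [show ((N : ℝ) - 2) / 4 + 1 / 2 = N / 4 by ring] at h
  rw [katoConst, div_le_iff₀ (by have := Gamma_pos_of_pos hy; positivity)]
  linarith

lemma le_katoConst {N : ℕ} (hN : 2 < N) : N / 2 - 2 ≤ katoConst N := by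
  have hN' : (2 : ℝ) < N := by exact_mod_cast hN
  have hy : 0 < ((N : ℝ) - 2) / 4 := by linarith
  have h := sq_mul_Gamma_sq_le hy
  rw [show ((N : ℝ) - 2) / 4 + 1 / 2 = N / 4 by ring] at h
  rw [katoConst, le_div_iff₀ (by have := Gamma_pos_of_pos hy; positivity)]
  nlinarith [sq_nonneg (Gamma (((N : ℝ) - 2) / 4)), Gamma_pos_of_pos hy]

lemma tendsto_katoConst_div :
    Tendsto (fun N : ℕ ↦ katoConst N / N) atTop (nhds (1 / 2)) := by
  refine tendsto_div_natCast_of_le (c := 2) ?_ fun L' hL' ↦ ⟨0, ?_⟩ <;>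
    filter_upwards [eventually_gt_atTop 2] with N hN
  · linarith [le_katoConst hN]
  · have : (0 : ℝ) ≤ N := N.cast_nonneg
    nlinarith [katoConst_le hN]

lemma tendsto_firstPosZero_besselJ_div {j : ℕ → ℝ}
    (hj : ∀ N : ℕ, 2 ≤ N → IsFirstPosZero (besselJ (((N : ℝ) - 3) / 2)) (j N)) :
    Tendsto (fun N : ℕ ↦ j N / N) atTop (nhds (1 / 2)) := by
  refine tendsto_div_natCast_of_le (c := 5 / 2) ?_ fun L' hL' ↦ ⟨π / √(1 - 1 / (2 * L') ^ 2), ?_⟩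
  · filter_upwards [eventually_ge_atTop 5] with N hN
    have hN' : (5 : ℝ) ≤ N := by exact_mod_cast hN
    linarith [sub_one_lt_of_isFirstPosZero_besselJ (by linarith) (hj N (by omega))]
  · filter_upwards [eventually_ge_atTop 5] with N hN
    have hN' : (5 : ℝ) ≤ N := by exact_mod_cast hN
    have := le_mul_add_of_isFirstPosZero_besselJ (by linarith) (by linarith : 1 < 2 * L')
      (hj N (by omega))
    nlinarith

/-- `C*_N / N → 1/2`, `j_{(N-3)/2,1} / N → 1/2`, hence `j_{(N-3)/2,1} ∼ C*_N`. -/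
theorem katoConst_asymp (j : ℕ → ℝ)
    (hj : ∀ N : ℕ, 2 ≤ N → IsFirstPosZero (besselJ (((N : ℝ) - 3) / 2)) (j N)) :
    Tendsto (fun N : ℕ => katoConst N / (N : ℝ)) atTop (nhds (1 / 2)) ∧
    Tendsto (fun N : ℕ => j N / (N : ℝ)) atTop (nhds (1 / 2)) ∧
    Tendsto (fun N : ℕ => katoConst N / j N) atTop (nhds 1) := by
  have hkato := tendsto_katoConst_div
  have hzero := tendsto_firstPosZero_besselJ_div hj
  refine ⟨hkato, hzero, ?_⟩
  have hratio := hkato.div hzero (by norm_num)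
  rw [div_self (by norm_num)] at hratio
  refine hratio.congr' ?_
  filter_upwards [eventually_gt_atTop 0] with N hN
  exact div_div_div_cancel_right₀ (by exact_mod_cast hN.ne') _ _
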